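/- arXiv:2603.22879 — 2 statements merged into one kernel-verified Lean document; each statement's English description precedes it below -/
import Mathlib

section
/- For a logit vector z ∈ ℝ^K with a strict unique maximum at coordinate c, the function T ↦ softmax(z/T)_c is strictly decreasing on (0, ∞). -/
/-!
Dividing numerator and denominator by `exp (z c / T)` writes the top-class probability as
`(∑ k, exp ((z k - z c) / T))⁻¹`. Every exponent `(z k - z c) / T` is nonpositive and
nondecreasing in `T`, and strictly increasing for each of the (at least one) classes `k ≠ c`,
so the denominator strictly increases with the temperature.
-/

open Finset Real Set

theorem exp_div_sum_exp_eq_inv_sum_exp_sub {ι : Type*} [Fintype ι] (f : ι → ℝ) (i : ι) :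
    exp (f i) / ∑ k, exp (f k) = (∑ k, exp (f k - f i))⁻¹ := by
  have hsum : ∑ k, exp (f k) = (∑ k, exp (f k - f i)) * exp (f i) := by
    simp only [sum_mul, ← exp_add, sub_add_cancel]
  rw [hsum, div_mul_cancel_right₀ (exp_pos _).ne']

theorem Finset.strictMonoOn_sum_of_exists_strictMonoOn {ι α M : Type*} [Preorder α]
    [AddCommMonoid M] [PartialOrder M] [IsOrderedCancelAddMonoid M] {s : Finset ι}
    {f : ι → α → M} {S : Set α} (hmono : ∀ i ∈ s, MonotoneOn (f i) S)
    (hstrict : ∃ i ∈ s, StrictMonoOn (f i) S) :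
    StrictMonoOn (fun x => ∑ i ∈ s, f i x) S := by
  intro a ha b hb hab
  obtain ⟨j, hj, hfj⟩ := hstrict
  exact sum_lt_sum (fun i hi => hmono i hi ha hb hab.le) ⟨j, hj, hfj ha hb hab⟩

theorem strictMonoOn_div_of_neg {d : ℝ} (hd : d < 0) : StrictMonoOn (fun T => d / T) (Ioi 0) :=
  fun _ ha _ _ hab => by
    simpa only [div_eq_mul_inv] using mul_lt_mul_of_neg_left (inv_strictAntiOn ha ‹_› hab) hd

theorem monotoneOn_div_of_nonpos {d : ℝ} (hd : d ≤ 0) : MonotoneOn (fun T => d / T) (Ioi 0) := by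
  rcases hd.lt_or_eq with hd | rfl
  · exact (strictMonoOn_div_of_neg hd).monotoneOn
  · simpa only [zero_div] using monotoneOn_const

/-- For a logit vector with strict unique maximum at `c`, the map
`T ↦ softmax(z/T)_c` is strictly decreasing on `(0, ∞)`. -/
theorem softmax_top_class_strictAntiOn_temperature
    (K : ℕ) (hK : 2 ≤ K) (z : Fin K → ℝ) (c : Fin K)
    (hc : ∀ k, k ≠ c → z k < z c) :
    StrictAntiOn (fun T : ℝ => Real.exp (z c / T) / ∑ k, Real.exp (z k / T))
      (Set.Ioi 0) := by
  have hrewrite : EqOn (fun T => (∑ k, exp ((z k - z c) / T))⁻¹)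
      (fun T : ℝ => exp (z c / T) / ∑ k, exp (z k / T)) (Ioi 0) := fun T _ => by
    simp only [exp_div_sum_exp_eq_inv_sum_exp_sub (fun k => z k / T) c, sub_div]
  have hsub_nonpos (k : Fin K) : z k - z c ≤ 0 := by
    rcases eq_or_ne k c with rfl | hk
    · exact (sub_self _).le
    · exact (sub_neg.mpr (hc k hk)).le
  obtain ⟨k₀, hk₀⟩ := Fintype.exists_ne_of_one_lt_card (by rw [Fintype.card_fin]; exact hK) c
  have hsum_strictMono : StrictMonoOn (fun T => ∑ k, exp ((z k - z c) / T)) (Ioi 0) :=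
    strictMonoOn_sum_of_exists_strictMonoOn
      (fun k _ => exp_monotone.comp_monotoneOn (monotoneOn_div_of_nonpos (hsub_nonpos k)))
      ⟨k₀, mem_univ _,
        exp_strictMono.comp_strictMonoOn (strictMonoOn_div_of_neg (sub_neg.mpr (hc k₀ hk₀)))⟩
  exact (inv_strictAntiOn.comp_strictMonoOn hsum_strictMono
    fun T _ => sum_pos (fun k _ => exp_pos _) ⟨c, mem_univ c⟩).congr hrewrite
end

section
/- The map T ↦ -log softmax(z/T)_c (the per-example voted-label NLL as a function of temperature) is continuous and strictly increasing on (0, ∞) when z has strict unique maximum at c, tends to 0 as T → 0⁺, and tends to log K as T → ∞. -/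
/-!
Dividing numerator and denominator of the softmax by `exp (z c / T)` turns the loss into
`log ∑ₖ exp ((z k - z c) / T)`. Every exponent `z k - z c` is `≤ 0`, and `< 0` for `k ≠ c`,
so each summand is nondecreasing in `T`, tends to `𝟙[k = c]` as `T → 0⁺` and to `1` as `T → ∞`.
-/

open Filter Topology Real Set

lemma div_le_div_of_nonpos_of_le_right {a s t : ℝ} (ha : a ≤ 0) (hs : 0 < s) (hst : s ≤ t) :
    a / s ≤ a / t := by
  rw [div_eq_mul_inv, div_eq_mul_inv]
  exact mul_le_mul_of_nonpos_left (inv_anti₀ hs hst) ha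

lemma div_lt_div_of_neg_of_lt_right {a s t : ℝ} (ha : a < 0) (hs : 0 < s) (hst : s < t) :
    a / s < a / t := by
  rw [div_eq_mul_inv, div_eq_mul_inv]
  exact mul_lt_mul_of_neg_left (inv_strictAnti₀ hs hst) ha

lemma tendsto_exp_div_nhdsGT_zero_of_neg {a : ℝ} (ha : a < 0) :
    Tendsto (fun T => exp (a / T)) (𝓝[>] 0) (𝓝 0) := by
  refine tendsto_exp_atBot.comp ?_
  exact (tendsto_inv_nhdsGT_zero.const_mul_atTop_of_neg ha).congr fun T =>
    (div_eq_mul_inv a T).symm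

lemma tendsto_exp_div_atTop (a : ℝ) : Tendsto (fun T => exp (a / T)) atTop (𝓝 1) := by
  simpa [Function.comp_def] using
    (continuous_exp.tendsto 0).comp (tendsto_const_nhds.div_atTop tendsto_id)

section LogitPartition

variable {ι : Type*} [Fintype ι] (z : ι → ℝ) (c : ι)

/-- The softmax normaliser `∑ₖ exp (z k / T)` divided by `exp (z c / T)`. -/
noncomputable def logitPartition (T : ℝ) : ℝ :=
  ∑ k, exp ((z k - z c) / T)

lemma logitPartition_pos (T : ℝ) : 0 < logitPartition z c T :=
  Finset.sum_pos (fun _ _ => exp_pos _) ⟨c, Finset.mem_univ c⟩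

lemma neg_log_softmax_eq_log_logitPartition (T : ℝ) :
    -log (exp (z c / T) / ∑ k, exp (z k / T)) = log (logitPartition z c T) := by
  have hsum : ∑ k, exp (z k / T) ≠ 0 :=
    (Finset.sum_pos (fun _ _ => exp_pos _) ⟨c, Finset.mem_univ c⟩).ne'
  have hpart : logitPartition z c T = (∑ k, exp (z k / T)) / exp (z c / T) := by
    simp only [logitPartition, Finset.sum_div, sub_div, exp_sub]
  rw [hpart, log_div hsum (exp_ne_zero _), log_div (exp_ne_zero _) hsum]
  ring

lemma continuousOn_logitPartition : ContinuousOn (logitPartition z c) (Ioi 0) :=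
  continuousOn_finsetSum _ fun _ _ =>
    continuous_exp.comp_continuousOn (continuousOn_const.div continuousOn_id fun _ hT => hT.ne')

variable {z c}

lemma strictMonoOn_logitPartition [Nontrivial ι] (hc : ∀ k, k ≠ c → z k < z c) :
    StrictMonoOn (logitPartition z c) (Ioi 0) := by
  intro s hs t _ hst
  obtain ⟨k₀, hk₀⟩ := exists_ne c
  refine Finset.sum_lt_sum (fun k _ => exp_le_exp.2 ?_)
    ⟨k₀, Finset.mem_univ _, exp_lt_exp.2 ?_⟩
  · have hk : z k - z c ≤ 0 := by
      rcases eq_or_ne k c with rfl | hk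
      · simp
      · linarith [hc k hk]
    exact div_le_div_of_nonpos_of_le_right hk hs hst.le
  · exact div_lt_div_of_neg_of_lt_right (by linarith [hc k₀ hk₀]) hs hst

lemma tendsto_logitPartition_nhdsGT_zero (hc : ∀ k, k ≠ c → z k < z c) :
    Tendsto (logitPartition z c) (𝓝[>] 0) (𝓝 1) := by
  classical
  have hterm : ∀ k, Tendsto (fun T => exp ((z k - z c) / T)) (𝓝[>] 0)
      (𝓝 (if k = c then 1 else 0)) := by
    intro k
    rcases eq_or_ne k c with rfl | hk
    · simp
    · simpa [hk] using tendsto_exp_div_nhdsGT_zero_of_neg (sub_neg.2 (hc k hk))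
  have h := tendsto_finsetSum Finset.univ fun k _ => hterm k
  rwa [Finset.sum_ite_eq', if_pos (Finset.mem_univ c)] at h

variable (z c)

lemma tendsto_logitPartition_atTop :
    Tendsto (logitPartition z c) atTop (𝓝 (Fintype.card ι)) := by
  have h := tendsto_finsetSum Finset.univ fun k _ => tendsto_exp_div_atTop (z k - z c)
  rwa [Finset.sum_const, Finset.card_univ, nsmul_one] at h

end LogitPartition

/-- The per-example voted-label NLL `L(T) = -log softmax(z/T)_c` is
continuous and strictly increasing on `(0, ∞)`, tends to `0` as `T → 0⁺`, and
tends to `log K` as `T → ∞`. -/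
theorem voted_label_nll_monotone_continuous_limits
    (K : ℕ) (hK : 2 ≤ K) (z : Fin K → ℝ) (c : Fin K)
    (hc : ∀ k, k ≠ c → z k < z c)
    (L : ℝ → ℝ)
    (hL : ∀ T, L T = -Real.log (Real.exp (z c / T) / ∑ k, Real.exp (z k / T))) :
    ContinuousOn L (Set.Ioi 0) ∧
      StrictMonoOn L (Set.Ioi 0) ∧
      Tendsto L (𝓝[>] 0) (𝓝 0) ∧
      Tendsto L atTop (𝓝 (Real.log K)) := by
  have : Nontrivial (Fin K) := Fin.nontrivial_iff_two_le.2 hK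
  obtain rfl : L = fun T => log (logitPartition z c T) :=
    funext fun T => (hL T).trans (neg_log_softmax_eq_log_logitPartition z c T)
  have hpos := logitPartition_pos z c
  refine ⟨(continuousOn_logitPartition z c).log fun T _ => (hpos T).ne',
    fun s hs t ht hst => log_lt_log (hpos s) (strictMonoOn_logitPartition hc hs ht hst), ?_, ?_⟩
  · simpa using (tendsto_logitPartition_nhdsGT_zero hc).log one_ne_zero
  · simpa using (tendsto_logitPartition_atTop z c).log (by simp; omega)
end
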